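/- arXiv:1403.0779 — 7 statements merged into one kernel-verified Lean document; each statement's English description precedes it below -/
import Mathlib

section
/- Let G=(V,E) be a directed graph and r a total ranking (injective function) on V. For any two vertices u,v with a path from u to v, among all shortest paths from u to v, pick one containing a vertex w of maximum rank; then the subpath from u to w is a shortest path from u to w in which every internal vertex has rank less than max(r(u),r(w)), and similarly the subpath from w to v is a shortest path from w to v in which every internal vertex has rank less than max(r(w),r(v)). -/
def IsPath {V : Type*} (E : V → V → Prop) (p : List V) (u v : V) : Prop :=
  List.Chain' E p ∧ p.head? = some u ∧ p.getLast? = some v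

def IsShortestPath {V : Type*} (E : V → V → Prop) (p : List V) (u v : V) : Prop :=
  IsPath E p u v ∧ ∀ q : List V, IsPath E q u v → p.length ≤ q.length

def Trough {V : Type*} (r : V → ℕ) (p : List V) (u v : V) : Prop :=
  ∀ x ∈ (p.drop 1).dropLast, r x < max (r u) (r v)

noncomputable def GDist {V : Type*} (E : V → V → Prop) (u v : V) : ℕ∞ :=
  sInf { n : ℕ∞ | ∃ p : List V, IsPath E p u v ∧ n = ((p.length - 1 : ℕ) : ℕ∞) }

/-!
Take a shortest path `p` from `u` to `v` and a vertex `w` of maximal rank on it, and cut `p`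
at `w`. Both pieces are shortest paths, since a shorter replacement of either piece would give a
shorter path from `u` to `v`. A shortest path repeats no vertex, so the internal vertices of the
pieces differ from `w`, and by injectivity of `r` their ranks are strictly below `r w`.
-/

namespace IsPath

variable {V : Type*} {E : V → V → Prop} {p : List V} {u v : V}

theorem eq_cons_tail (h : IsPath E p u v) : p = u :: p.tail :=
  List.eq_cons_of_mem_head? h.2.1

theorem eq_dropLast_append (h : IsPath E p u v) : p = p.dropLast ++ [v] :=
  (List.dropLast_append_getLast? v h.2.2).symm

theorem append_cons_iff {a c : List V} {w : V} :
    IsPath E (a ++ w :: c) u v ↔ IsPath E (a ++ [w]) u w ∧ IsPath E (w :: c) w v := by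
  have hhead : (a ++ w :: c).head? = (a ++ [w]).head? := by cases a <;> rfl
  unfold IsPath
  rw [List.Chain', List.isChain_split, hhead, List.getLast?_append_cons]
  simp only [List.getLast?_append_cons, List.head?_cons]
  tauto

theorem trough_of_nodup {r : V → ℕ} (hp : IsPath E p u v) (hr : Function.Injective r)
    (hnd : p.Nodup) (hmax : ∀ x ∈ p, r x ≤ max (r u) (r v)) : Trough r p u v := by
  intro x hx
  have hx_tail : x ∈ p.tail := (List.dropLast_sublist _).subset (by simpa using hx)
  have hx_init : x ∈ p.dropLast := by
    rw [List.dropLast_drop_eq_drop_dropLast] at hx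
    exact (List.drop_sublist _ _).subset hx
  have hxu : x ≠ u := by
    rintro rfl
    rw [hp.eq_cons_tail] at hnd
    exact (List.nodup_cons.1 hnd).1 hx_tail
  have hxv : x ≠ v := by
    rintro rfl
    rw [hp.eq_dropLast_append] at hnd
    exact List.disjoint_of_nodup_append hnd hx_init (List.mem_singleton_self x)
  have hrank := hmax x (List.mem_of_mem_tail hx_tail)
  have hx_ne : r x ≠ r u ∧ r x ≠ r v := ⟨hr.ne hxu, hr.ne hxv⟩
  omega

end IsPath

namespace IsShortestPath

variable {V : Type*} {E : V → V → Prop} {u v w : V} {a c : List V}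

theorem left_of_append_cons (h : IsShortestPath E (a ++ w :: c) u v) :
    IsShortestPath E (a ++ [w]) u w := by
  have hsplit := IsPath.append_cons_iff.1 h.1
  refine ⟨hsplit.1, fun q hq => ?_⟩
  have hq' : IsPath E (q.dropLast ++ w :: c) u v := by
    refine IsPath.append_cons_iff.2 ⟨?_, hsplit.2⟩
    rwa [← hq.eq_dropLast_append]
  have hlen := h.2 _ hq'
  rw [hq.eq_dropLast_append]
  simp only [List.length_append, List.length_cons] at hlen ⊢
  omega

theorem right_of_append_cons (h : IsShortestPath E (a ++ w :: c) u v) :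
    IsShortestPath E (w :: c) w v := by
  have hsplit := IsPath.append_cons_iff.1 h.1
  refine ⟨hsplit.2, fun q hq => ?_⟩
  have hq' : IsPath E (a ++ w :: q.tail) u v := by
    refine IsPath.append_cons_iff.2 ⟨hsplit.1, ?_⟩
    rwa [← hq.eq_cons_tail]
  have hlen := h.2 _ hq'
  rw [hq.eq_cons_tail]
  simp only [List.length_append, List.length_cons] at hlen ⊢
  omega

/-- Cutting out the cycle between two occurrences of a vertex gives a strictly shorter path. -/
theorem nodup {p : List V} (h : IsShortestPath E p u v) : p.Nodup := by
  by_contra hdup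
  obtain ⟨x, hx⟩ := not_forall_not.1 (mt List.nodup_iff_sublist.2 hdup)
  obtain ⟨r₁, r₂, rfl, hx₁, hx₂⟩ := List.cons_sublist_iff.1 hx
  obtain ⟨a, b, rfl⟩ := List.append_of_mem hx₁
  obtain ⟨m, c, rfl⟩ := List.append_of_mem (List.singleton_sublist.1 hx₂)
  have hsplit : IsPath E (a ++ [x]) u x ∧ IsPath E ((x :: (b ++ m)) ++ x :: c) x v := by
    simpa using IsPath.append_cons_iff.1 (by simpa using h.1)
  have hshort : IsPath E (a ++ x :: c) u v :=
    IsPath.append_cons_iff.2 ⟨hsplit.1, (IsPath.append_cons_iff.1 hsplit.2).2⟩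
  have hlen := h.2 _ hshort
  simp only [List.length_append, List.length_cons] at hlen
  omega

end IsShortestPath

theorem exists_isShortestPath {V : Type*} (E : V → V → Prop) {u v : V}
    (h : ∃ p : List V, IsPath E p u v) : ∃ p : List V, IsShortestPath E p u v := by
  classical
  have hn : ∃ n, ∃ p : List V, IsPath E p u v ∧ p.length = n :=
    let ⟨p, hp⟩ := h; ⟨_, p, hp, rfl⟩
  obtain ⟨p, hp, hlen⟩ := Nat.find_spec hn
  exact ⟨p, hp, fun q hq => hlen ▸ Nat.find_min' hn ⟨q, hq, rfl⟩⟩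

theorem stmt0 {V : Type*} (E : V → V → Prop) (r : V → ℕ)
    (hr : Function.Injective r) (u v : V)
    (h : ∃ p : List V, IsPath E p u v) :
    ∃ (p : List V) (w : V) (p1 p2 : List V),
      IsShortestPath E p u v ∧ w ∈ p ∧ (∀ x ∈ p, r x ≤ r w) ∧
      p = p1 ++ p2.tail ∧
      IsShortestPath E p1 u w ∧ Trough r p1 u w ∧
      IsShortestPath E p2 w v ∧ Trough r p2 w v := by
  obtain ⟨p, hp⟩ := exists_isShortestPath E h
  obtain ⟨w, hw, hwmax⟩ : ∃ w ∈ p, ∀ x ∈ p, r x ≤ r w :=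
    Set.exists_max_image _ r p.finite_toSet ⟨u, List.mem_of_mem_head? hp.1.2.1⟩
  obtain ⟨a, c, rfl⟩ := List.append_of_mem hw
  have hp₁ := hp.left_of_append_cons
  have hp₂ := hp.right_of_append_cons
  refine ⟨_, w, a ++ [w], w :: c, hp, hw, hwmax, by simp, hp₁, ?_, hp₂, ?_⟩
  · have hsub : (a ++ [w]).Sublist (a ++ w :: c) :=
      (List.singleton_sublist.2 List.mem_cons_self).append_left a
    exact hp₁.1.trough_of_nodup hr (hp.nodup.sublist hsub)
      fun x hx => le_max_of_le_right (hwmax x (hsub.subset hx))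
  · have hsub : (w :: c).Sublist (a ++ w :: c) := List.sublist_append_right a _
    exact hp₂.1.trough_of_nodup hr (hp.nodup.sublist hsub)
      fun x hx => le_max_of_le_left (hwmax x (hsub.subset hx))
end

section
/- Let G=(V,E) be a directed graph with a total ranking r on V. Suppose a labeling assigns to each vertex v sets L_out(v) and L_in(v) of pairs (w,d) such that: (u,0) ∈ L_out(u) ∩ L_in(u) for all u; whenever there is a trough shortest path from v to u with r(u) > r(v), then (u, dist_G(v,u)) ∈ L_out(v); and whenever there is a trough shortest path from u to v with r(u) > r(v), then (u, dist_G(u,v)) ∈ L_in(v); moreover every pair (w,d) ∈ L_out(v) satisfies that there is a path from v to w of length d (and symmetrically for L_in). Then for any s,t with a path from s to t, the minimum of d1+d2 over all w with (w,d1) ∈ L_out(s) and (w,d2) ∈ L_in(t) equals dist_G(s,t). -/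
section Helpers

variable {V : Type*} {E : V → V → Prop}

theorem gcongr' (p : List V) {a b : ℕ} (h : a = b) (ha : a < p.length) :
    p[a] = p[b]'(h ▸ ha) := by subst h; rfl

theorem path_pos {p : List V} {u v : V} (h : IsPath E p u v) : 0 < p.length := by
  rcases p with _ | ⟨a, q⟩
  · simp [IsPath] at h
  · simp

theorem path_head {p : List V} {u v : V} (h : IsPath E p u v) (h0 : 0 < p.length) :
    p[0] = u := by
  have := h.2.1
  rwa [List.head?_eq_getElem?, List.getElem?_eq_getElem h0, Option.some_inj] at this

theorem path_last {p : List V} {u v : V} (h : IsPath E p u v)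
    (h0 : p.length - 1 < p.length) : p[p.length - 1] = v := by
  have := h.2.2
  rwa [List.getLast?_eq_getElem?, List.getElem?_eq_getElem h0, Option.some_inj] at this

theorem path_step {p : List V} {u v : V} (h : IsPath E p u v) (i : ℕ)
    (hi : i + 1 < p.length) : E p[i] p[i + 1] := by
  have := List.isChain_iff_getElem.mp h.1 i (by omega)
  simpa using this

theorem path_mk {p : List V} {u v : V} (hne : 0 < p.length)
    (hstep : ∀ i (hi : i + 1 < p.length), E p[i] p[i + 1])
    (hh : p[0] = u) (hl : p[p.length - 1]'(by omega) = v) : IsPath E p u v := by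
  refine ⟨List.isChain_iff_getElem.mpr ?_, ?_, ?_⟩
  · intro i hi
    simpa using hstep i (by omega)
  · rw [List.head?_eq_getElem?, List.getElem?_eq_getElem hne, hh]
  · rw [List.getLast?_eq_getElem?,
      List.getElem?_eq_getElem (show p.length - 1 < p.length by omega), hl]

theorem path_take {p : List V} {u v : V} (h : IsPath E p u v) (i : ℕ) (hi : i < p.length) :
    IsPath E (p.take (i + 1)) u p[i] := by
  have hlen : (p.take (i + 1)).length = i + 1 := by simp; omega
  refine path_mk (by omega) ?_ ?_ ?_
  · intro j hj
    rw [hlen] at hj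
    simp only [List.getElem_take]
    exact path_step h j (by omega)
  · simp only [List.getElem_take]
    exact path_head h (by omega)
  · simp only [List.getElem_take]
    rw [gcongr' p (show (p.take (i+1)).length - 1 = i by omega)]

theorem path_drop {p : List V} {u v : V} (h : IsPath E p u v) (i : ℕ) (hi : i < p.length) :
    IsPath E (p.drop i) p[i] v := by
  have hlen : (p.drop i).length = p.length - i := by simp
  refine path_mk (by omega) ?_ ?_ ?_
  · intro j hj
    rw [hlen] at hj
    simp only [List.getElem_drop]
    have := path_step h (i + j) (by omega)
    rwa [gcongr' p (show i + j + 1 = i + (j + 1) by omega)] at this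
  · simp only [List.getElem_drop]
    rw [gcongr' p (show i + 0 = i by omega)]
  · simp only [List.getElem_drop]
    rw [gcongr' p (show i + ((p.drop i).length - 1) = p.length - 1 by simp; omega)]
    exact path_last h (by omega)

theorem path_append {p q : List V} {u v w : V} (hp : IsPath E p u v) (hq : IsPath E q v w) :
    IsPath E (p ++ q.drop 1) u w ∧ (p ++ q.drop 1).length = p.length + q.length - 1 := by
  have hpp := path_pos hp
  have hqp := path_pos hq
  have hlen : (p ++ q.drop 1).length = p.length + q.length - 1 := by simp; omega
  refine ⟨path_mk (by omega) ?_ ?_ ?_, hlen⟩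
  · intro j hj
    rw [hlen] at hj
    rcases lt_trichotomy (j + 1) p.length with h1 | h1 | h1
    · rw [List.getElem_append_left (by omega), List.getElem_append_left h1]
      exact path_step hp j (by omega)
    · rw [List.getElem_append_left (by omega), List.getElem_append_right (by omega)]
      simp only [List.getElem_drop]
      rw [gcongr' p (show j = p.length - 1 by omega), path_last hp (by omega)]
      rw [gcongr' q (show 1 + (j + 1 - p.length) = 0 + 1 by omega)]
      have := path_step hq 0 (by omega)
      rwa [path_head hq (by omega)] at this
    · rw [List.getElem_append_right (by omega), List.getElem_append_right (by omega)]
      simp only [List.getElem_drop]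
      have := path_step hq (1 + (j - p.length)) (by omega)
      rwa [gcongr' q (show 1 + (j - p.length) + 1 = 1 + (j + 1 - p.length) by omega)] at this
  · rw [List.getElem_append_left (by omega)]
    exact path_head hp (by omega)
  · rcases Nat.lt_or_ge 1 q.length with h1 | h1
    · rw [List.getElem_append_right (by rw [hlen]; omega)]
      simp only [List.getElem_drop]
      rw [gcongr' q (show 1 + ((p ++ q.drop 1).length - 1 - p.length) = q.length - 1 by
        rw [hlen]; omega)]
      exact path_last hq (by omega)
    · have hq1 : q.length = 1 := by omega
      rw [List.getElem_append_left (by rw [hlen]; omega)]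
      rw [gcongr' p (show (p ++ q.drop 1).length - 1 = p.length - 1 by rw [hlen]; omega)]
      rw [path_last hp (by omega)]
      have h0 := path_head hq (by omega)
      have hL := path_last hq (by omega)
      rw [gcongr' q (show q.length - 1 = 0 by omega)] at hL
      rw [← hL, ← h0]

theorem splice {p : List V} {u v : V} (hp : IsPath E p u v) {i j : ℕ} (hij : i < j)
    (hj : j < p.length) (heq : p[i]'(by omega) = p[j]) :
    ∃ q : List V, IsPath E q u v ∧ q.length < p.length := by
  refine ⟨p.take i ++ p.drop j, ?_, ?_⟩
  swap
  · simp; omega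
  have hlen : (p.take i ++ p.drop j).length = i + (p.length - j) := by simp; omega
  have hi : i < p.length := by omega
  have hti : (p.take i).length = i := by simp; omega
  refine path_mk (by omega) ?_ ?_ ?_
  · intro k hk
    rw [hlen] at hk
    rcases lt_trichotomy (k + 1) i with h1 | h1 | h1
    · rw [List.getElem_append_left (by omega), List.getElem_append_left (by rw [hti]; omega)]
      simp only [List.getElem_take]
      exact path_step hp k (by omega)
    · rw [List.getElem_append_left (by omega), List.getElem_append_right (by omega)]
      simp only [List.getElem_take, List.getElem_drop]
      rw [gcongr' p (show j + (k + 1 - (p.take i).length) = j by rw [hti]; omega), ← heq]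
      have := path_step hp k (by omega)
      rwa [gcongr' p (show k + 1 = i by omega)] at this
    · rw [List.getElem_append_right (by omega), List.getElem_append_right (by omega)]
      simp only [List.getElem_drop]
      have := path_step hp (j + (k - (p.take i).length)) (by rw [hti]; omega)
      rwa [gcongr' p (show j + (k - (p.take i).length) + 1
        = j + (k + 1 - (p.take i).length) by rw [hti]; omega)] at this
  · rcases Nat.eq_zero_or_pos i with h0 | h0
    · rw [List.getElem_append_right (by rw [hti]; omega)]
      simp only [List.getElem_drop]
      rw [gcongr' p (show j + (0 - (p.take i).length) = j by rw [hti]; omega), ← heq]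
      rw [gcongr' p (show i = 0 by omega)]
      exact path_head hp (by omega)
    · rw [List.getElem_append_left (by rw [hti]; omega)]
      simp only [List.getElem_take]
      exact path_head hp (by omega)
  · rw [List.getElem_append_right (by rw [hlen, hti]; omega)]
    simp only [List.getElem_drop]
    rw [gcongr' p (show j + ((p.take i ++ p.drop j).length - 1 - (p.take i).length)
      = p.length - 1 by rw [hlen, hti]; omega)]
    exact path_last hp (by omega)

theorem shortest_inj {p : List V} {u v : V} (hp : IsShortestPath E p u v) :
    ∀ i j (hi : i < p.length) (hj : j < p.length), p[i] = p[j] → i = j := by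
  intro i j hi hj heq
  by_contra hne
  rcases Nat.lt_or_ge i j with h | h
  · obtain ⟨q, hq, hqlen⟩ := splice hp.1 h hj heq
    exact absurd (hp.2 q hq) (by omega)
  · obtain ⟨q, hq, hqlen⟩ := splice hp.1 (show j < i by omega) hi heq.symm
    exact absurd (hp.2 q hq) (by omega)

theorem take_shortest {p : List V} {u v : V} (hp : IsShortestPath E p u v) (i : ℕ)
    (hi : i < p.length) : IsShortestPath E (p.take (i + 1)) u p[i] := by
  refine ⟨path_take hp.1 i hi, ?_⟩
  intro q hq
  have hd := path_drop hp.1 i hi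
  obtain ⟨happ, hlen⟩ := path_append hq hd
  have hle := hp.2 _ happ
  have hqp := path_pos hq
  rw [hlen] at hle
  simp only [List.length_take, List.length_drop] at *
  omega

theorem drop_shortest {p : List V} {u v : V} (hp : IsShortestPath E p u v) (i : ℕ)
    (hi : i < p.length) : IsShortestPath E (p.drop i) p[i] v := by
  refine ⟨path_drop hp.1 i hi, ?_⟩
  intro q hq
  have ht := path_take hp.1 i hi
  obtain ⟨happ, hlen⟩ := path_append ht hq
  have hle := hp.2 _ happ
  have hqp := path_pos hq
  rw [hlen] at hle
  simp only [List.length_take, List.length_drop] at *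
  omega

theorem mem_internal {q : List V} {x : V} (hx : x ∈ (q.drop 1).dropLast) :
    ∃ (k : ℕ) (hk : k + 1 < q.length - 1), q[k + 1]'(by omega) = x := by
  rw [List.mem_iff_getElem] at hx
  obtain ⟨k, hk, hval⟩ := hx
  simp only [List.length_dropLast, List.length_drop] at hk
  refine ⟨k, by omega, ?_⟩
  rw [← hval]
  simp only [List.getElem_dropLast, List.getElem_drop]
  exact gcongr' q (show k + 1 = 1 + k by omega) (by omega)

end Helpers

theorem stmt1 {V : Type*} (E : V → V → Prop) (r : V → ℕ) (hr : Function.Injective r)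
    (Lout Lin : V → Set (V × ℕ))
    (htriv : ∀ u : V, (u, 0) ∈ Lout u ∧ (u, 0) ∈ Lin u)
    (hout : ∀ u v : V, ∀ p : List V, IsShortestPath E p v u → Trough r p v u →
      r v < r u → (u, p.length - 1) ∈ Lout v)
    (hin : ∀ u v : V, ∀ p : List V, IsShortestPath E p u v → Trough r p u v →
      r v < r u → (u, p.length - 1) ∈ Lin v)
    (soundOut : ∀ v w d, (w, d) ∈ Lout v → ∃ p : List V, IsPath E p v w ∧ p.length - 1 = d)
    (soundIn : ∀ v w d, (w, d) ∈ Lin v → ∃ p : List V, IsPath E p w v ∧ p.length - 1 = d) :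
    ∀ s t : V, (∃ p : List V, IsPath E p s t) →
      sInf { x : ℕ∞ | ∃ (w : V) (d1 d2 : ℕ), (w, d1) ∈ Lout s ∧ (w, d2) ∈ Lin t ∧
        x = (d1 : ℕ∞) + (d2 : ℕ∞) } = GDist E s t := by
  rintro s t ⟨p0, hp0⟩
  -- obtain a shortest path pm
  have hNe : {n : ℕ | ∃ p : List V, IsPath E p s t ∧ p.length = n}.Nonempty :=
    ⟨p0.length, p0, hp0, rfl⟩
  obtain ⟨pm, hpm, hpmlen⟩ := Nat.sInf_mem hNe
  have hshort : ∀ q : List V, IsPath E q s t → pm.length ≤ q.length := by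
    intro q hq
    rw [hpmlen]
    exact Nat.sInf_le ⟨q, hq, rfl⟩
  have hsp : IsShortestPath E pm s t := ⟨hpm, hshort⟩
  set n := pm.length with hn
  have hnpos : 0 < n := path_pos hpm
  -- GDist equals n - 1
  have hG : GDist E s t = ((n - 1 : ℕ) : ℕ∞) := by
    apply le_antisymm
    · exact sInf_le ⟨pm, hpm, rfl⟩
    · apply le_sInf
      rintro x ⟨q, hq, rfl⟩
      exact_mod_cast Nat.sub_le_sub_right (hshort q hq) 1
  rw [hG]
  apply le_antisymm
  · -- exhibit a hub
    -- maximal rank index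
    have hmaxex : ∃ i ∈ Finset.range n, ∀ j ∈ Finset.range n, r (pm.getD j s) ≤ r (pm.getD i s) :=
      Finset.exists_max_image _ _ ⟨0, Finset.mem_range.mpr hnpos⟩
    obtain ⟨i, hiR, hmax'⟩ := hmaxex
    rw [Finset.mem_range] at hiR
    have hgetD : ∀ j (hj : j < n), pm.getD j s = pm[j] := by
      intro j hj
      rw [List.getD_eq_getElem?_getD, List.getElem?_eq_getElem hj]
      rfl
    have hmax : ∀ j (hj : j < n), r pm[j] ≤ r pm[i] := by
      intro j hj
      have := hmax' j (Finset.mem_range.mpr hj)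
      rwa [hgetD j hj, hgetD i hiR] at this
    have hinj := shortest_inj hsp
    have hhead : pm[0] = s := path_head hpm hnpos
    have hlast : pm[n - 1]'(by omega) = t := path_last hpm (by omega)
    -- rank strictness for non-i indices
    have hlt : ∀ j (hj : j < n), j ≠ i → r pm[j] < r pm[i] := by
      intro j hj hne
      refine lt_of_le_of_ne (hmax j hj) ?_
      intro hreq
      exact hne (hinj j i hj hiR (hr hreq))
    have hkey : ∃ (w : V) (d1 d2 : ℕ),
        (w, d1) ∈ Lout s ∧ (w, d2) ∈ Lin t ∧ d1 + d2 = n - 1 := by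
      rcases Nat.eq_zero_or_pos i with hi0 | hi0
      · -- i = 0 : hub is s
        subst hi0
        rcases Nat.lt_or_ge 1 n with h1 | h1
        · -- n ≥ 2, use hin on the whole path
          have htr : Trough r pm s t := by
            intro x hx
            obtain ⟨k, hk, rfl⟩ := mem_internal hx
            have := hlt (k + 1) (by omega) (by omega)
            rw [hhead] at this
            exact lt_of_lt_of_le this (le_max_left _ _)
          have hst : r t < r s := by
            have := hlt (n - 1) (by omega) (by omega)
            rwa [hhead, hlast] at this
          have := hin s t pm hsp htr hst
          exact ⟨s, 0, n - 1, (htriv s).1, this, by omega⟩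
        · -- n = 1 : s = t
          have hn1 : n = 1 := by omega
          have hts : t = s := by
            rw [← hhead, ← hlast]
            exact gcongr' pm (by omega) (by omega)
          refine ⟨s, 0, 0, (htriv s).1, ?_, by omega⟩
          rw [hts]
          exact (htriv s).2
      · rcases Nat.lt_or_ge i (n - 1) with hiN | hiN
        · -- 0 < i < n - 1 : interior hub
          set w := pm[i] with hw
          -- prefix
          have hpre : IsShortestPath E (pm.take (i + 1)) s w := take_shortest hsp i hiR
          have htlen : (pm.take (i + 1)).length = i + 1 := by simp [← hn]; omega
          have htrpre : Trough r (pm.take (i + 1)) s w := by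
            intro x hx
            obtain ⟨k, hk, hval⟩ := mem_internal hx
            rw [htlen] at hk
            rw [List.getElem_take] at hval
            subst hval
            exact lt_of_lt_of_le (hlt (k + 1) (by omega) (by omega)) (le_max_right _ _)
          have hsw : r s < r w := by
            have := hlt 0 (by omega) (by omega)
            rwa [hhead] at this
          have h1 := hout w s (pm.take (i + 1)) hpre htrpre hsw
          rw [htlen] at h1
          -- suffix
          have hsuf : IsShortestPath E (pm.drop i) w t := drop_shortest hsp i hiR
          have hdlen : (pm.drop i).length = n - i := by simp [← hn]
          have htrsuf : Trough r (pm.drop i) w t := by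
            intro x hx
            obtain ⟨k, hk, hval⟩ := mem_internal hx
            rw [hdlen] at hk
            rw [List.getElem_drop] at hval
            subst hval
            exact lt_of_lt_of_le (hlt (i + (k + 1)) (by omega) (by omega)) (le_max_left _ _)
          have htw : r t < r w := by
            have := hlt (n - 1) (by omega) (by omega)
            rwa [hlast] at this
          have h2 := hin w t (pm.drop i) hsuf htrsuf htw
          rw [hdlen] at h2
          exact ⟨w, i + 1 - 1, n - i - 1, h1, h2, by omega⟩
        · -- i = n - 1 > 0 : hub is t
          have hiN' : i = n - 1 := by omega
          subst hiN'
          have htr : Trough r pm s t := by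
            intro x hx
            obtain ⟨k, hk, rfl⟩ := mem_internal hx
            have := hlt (k + 1) (by omega) (by omega)
            rw [hlast] at this
            exact lt_of_lt_of_le this (le_max_right _ _)
          have hst : r s < r t := by
            have := hlt 0 (by omega) (by omega)
            rwa [hhead, hlast] at this
          have := hout t s pm hsp htr hst
          refine ⟨t, n - 1, 0, this, (htriv t).2, by omega⟩
    obtain ⟨w, d1, d2, h1, h2, hsum⟩ := hkey
    apply sInf_le
    refine ⟨w, d1, d2, h1, h2, ?_⟩
    rw [← hsum]
    push_cast
    ring
  · -- every element of the set is ≥ n - 1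
    apply le_sInf
    rintro x ⟨w, d1, d2, h1, h2, rfl⟩
    obtain ⟨q1, hq1, hq1len⟩ := soundOut s w d1 h1
    obtain ⟨q2, hq2, hq2len⟩ := soundIn t w d2 h2
    obtain ⟨happ, hlen⟩ := path_append hq1 hq2
    have hle := hshort _ happ
    have h1p := path_pos hq1
    have h2p := path_pos hq2
    have : (n - 1 : ℕ) ≤ d1 + d2 := by omega
    calc ((n - 1 : ℕ) : ℕ∞) ≤ ((d1 + d2 : ℕ) : ℕ∞) := by exact_mod_cast this
      _ = (d1 : ℕ∞) + (d2 : ℕ∞) := by push_cast; ring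
end

section
/- Let G=(V,E) be a directed graph with a total ranking r. In the iterative hop-doubling label generation process using Rules 1–6, every label entry generated by Rule 3 (from a previous-iteration entry (u→v) with r(u)<r(v) and an existing entry (v→u3) with r(v)<r(u3), generating (u→u3)) is also generated, in the same or an earlier iteration, by applications of Rule 1 or Rule 2 alone. Hence Rules 1,2,4,5 generate the same set of label entries as Rules 1,2,3,4,5,6. -/
/-- Label-entry generation closure under all six hop-doubling rules.
`Gen6 E r u v d` : the entry (u → v, d) is generated. Initial entries are the edges. -/
inductive Gen6 {V : Type*} (E : V → V → Prop) (r : V → ℕ) : V → V → ℕ → Prop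
  | edge {u v : V} : E u v → Gen6 E r u v 1
  | rule1 {u v u1 : V} {d d1 : ℕ} : Gen6 E r u v d → r u < r v →
      Gen6 E r u1 u d1 → r u < r u1 → Gen6 E r u1 v (d1 + d)
  | rule2 {u v u2 : V} {d d2 : ℕ} : Gen6 E r u v d → r u < r v →
      Gen6 E r u2 u d2 → r u2 < r u → Gen6 E r u2 v (d2 + d)
  | rule3 {u v u3 : V} {d d3 : ℕ} : Gen6 E r u v d → r u < r v →
      Gen6 E r v u3 d3 → r v < r u3 → Gen6 E r u u3 (d3 + d)
  | rule4 {u v u4 : V} {d d4 : ℕ} : Gen6 E r u v d → r v < r u →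
      Gen6 E r v u4 d4 → r v < r u4 → Gen6 E r u u4 (d4 + d)
  | rule5 {u v u5 : V} {d d5 : ℕ} : Gen6 E r u v d → r v < r u →
      Gen6 E r v u5 d5 → r u5 < r v → Gen6 E r u u5 (d5 + d)
  | rule6 {u v u6 : V} {d d6 : ℕ} : Gen6 E r u v d → r v < r u →
      Gen6 E r u6 u d6 → r u < r u6 → Gen6 E r u6 v (d6 + d)

/-- Generation closure using only Rules 1, 2, 4 and 5. -/
inductive Gen4 {V : Type*} (E : V → V → Prop) (r : V → ℕ) : V → V → ℕ → Prop
  | edge {u v : V} : E u v → Gen4 E r u v 1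
  | rule1 {u v u1 : V} {d d1 : ℕ} : Gen4 E r u v d → r u < r v →
      Gen4 E r u1 u d1 → r u < r u1 → Gen4 E r u1 v (d1 + d)
  | rule2 {u v u2 : V} {d d2 : ℕ} : Gen4 E r u v d → r u < r v →
      Gen4 E r u2 u d2 → r u2 < r u → Gen4 E r u2 v (d2 + d)
  | rule4 {u v u4 : V} {d d4 : ℕ} : Gen4 E r u v d → r v < r u →
      Gen4 E r v u4 d4 → r v < r u4 → Gen4 E r u u4 (d4 + d)
  | rule5 {u v u5 : V} {d d5 : ℕ} : Gen4 E r u v d → r v < r u →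
      Gen4 E r v u5 d5 → r u5 < r v → Gen4 E r u u5 (d5 + d)

/-- Rules 1,2,4,5 generate exactly the same label entries as Rules 1–6. -/
theorem stmt2 {V : Type*} (E : V → V → Prop) (r : V → ℕ)
    (hr : Function.Injective r) :
    ∀ (u v : V) (d : ℕ), Gen6 E r u v d ↔ Gen4 E r u v d := by
  intro u v d
  constructor
  · intro h
    induction h with
    | edge h => exact .edge h
    | rule1 _ h1 _ h2 ih ih' => exact .rule1 ih h1 ih' h2
    | rule2 _ h1 _ h2 ih ih' => exact .rule2 ih h1 ih' h2
    | rule3 _ h1 _ h2 ih ih' => rw [Nat.add_comm]; exact .rule2 ih' h2 ih h1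
    | rule4 _ h1 _ h2 ih ih' => exact .rule4 ih h1 ih' h2
    | rule5 _ h1 _ h2 ih ih' => exact .rule5 ih h1 ih' h2
    | rule6 _ h1 _ h2 ih ih' => rw [Nat.add_comm]; exact .rule5 ih' h2 ih h1
  · intro h
    induction h with
    | edge h => exact .edge h
    | rule1 _ h1 _ h2 ih ih' => exact .rule1 ih h1 ih' h2
    | rule2 _ h1 _ h2 ih ih' => exact .rule2 ih h1 ih' h2
    | rule4 _ h1 _ h2 ih ih' => exact .rule4 ih h1 ih' h2
    | rule5 _ h1 _ h2 ih ih' => exact .rule5 ih h1 ih' h2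
end

section
/- Let G=(V,E) be a directed unweighted graph with a total ranking r, and run the hop-doubling labeling algorithm (initialized with one label entry per edge, iterating the generation rules). Then for all i ≥ 0, after the 2i-th iteration, for each positive integer k ≤ 2^i, every trough shortest path of hop length k is covered by a generated label entry: i.e., for every trough shortest path p from u to v of hop length k with r(u)<r(v), the entry (u→v, ℓ(p)) has been generated. -/
/-- `HDCov E r k u v d` : by the end of iteration `k` of hop-doubling, a label entry
(u → v, d) has been generated. Iteration 0 is the initialization with the edges; at each
subsequent iteration, entries available at the previous iteration are combined by the
six generation rules. -/
inductive HDCov {V : Type*} (E : V → V → Prop) (r : V → ℕ) : ℕ → V → V → ℕ → Prop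
  | edge {u v : V} : E u v → HDCov E r 0 u v 1
  | mono {k : ℕ} {u v : V} {d : ℕ} : HDCov E r k u v d → HDCov E r (k + 1) u v d
  | rule1 {k : ℕ} {u v u1 : V} {d d1 : ℕ} : HDCov E r k u v d → r u < r v →
      HDCov E r k u1 u d1 → r u < r u1 → HDCov E r (k + 1) u1 v (d1 + d)
  | rule2 {k : ℕ} {u v u2 : V} {d d2 : ℕ} : HDCov E r k u v d → r u < r v →
      HDCov E r k u2 u d2 → r u2 < r u → HDCov E r (k + 1) u2 v (d2 + d)
  | rule3 {k : ℕ} {u v u3 : V} {d d3 : ℕ} : HDCov E r k u v d → r u < r v →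
      HDCov E r k v u3 d3 → r v < r u3 → HDCov E r (k + 1) u u3 (d3 + d)
  | rule4 {k : ℕ} {u v u4 : V} {d d4 : ℕ} : HDCov E r k u v d → r v < r u →
      HDCov E r k v u4 d4 → r v < r u4 → HDCov E r (k + 1) u u4 (d4 + d)
  | rule5 {k : ℕ} {u v u5 : V} {d d5 : ℕ} : HDCov E r k u v d → r v < r u →
      HDCov E r k v u5 d5 → r u5 < r v → HDCov E r (k + 1) u u5 (d5 + d)
  | rule6 {k : ℕ} {u v u6 : V} {d d6 : ℕ} : HDCov E r k u v d → r v < r u →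
      HDCov E r k u6 u d6 → r u < r u6 → HDCov E r (k + 1) u6 v (d6 + d)

section

variable {V : Type*} {E : V → V → Prop} {r : V → ℕ}

namespace HDCov

variable {m n : ℕ} {x y z : V} {d₁ d₂ : ℕ}

theorem mono_of_le (h : HDCov E r m x y d₁) (hmn : m ≤ n) : HDCov E r n x y d₁ := by
  induction n, hmn using Nat.le_induction with
  | base => exact h
  | succ n _ ih => exact ih.mono

theorem concat_valley (h₁ : HDCov E r n x y d₁) (h₂ : HDCov E r n y z d₂) (hx : r y < r x)
    (hz : r y < r z) : HDCov E r (n + 1) x z (d₂ + d₁) :=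
  h₁.rule4 hx h₂ hz

theorem concat_ascending (h₁ : HDCov E r n x y d₁) (h₂ : HDCov E r n y z d₂) (hxy : r x < r y)
    (hyz : r y < r z) : HDCov E r (n + 1) x z (d₂ + d₁) :=
  h₁.rule3 hxy h₂ hyz

theorem concat_descending (h₁ : HDCov E r n x y d₁) (h₂ : HDCov E r n y z d₂) (hxy : r y < r x)
    (hyz : r z < r y) : HDCov E r (n + 1) x z (d₂ + d₁) :=
  h₁.rule5 hxy h₂ hyz

end HDCov

section SimplePath

variable {f : ℕ → V} {K : ℕ}

def TroughSegment (r : V → ℕ) (f : ℕ → V) (a c : ℕ) : Prop :=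
  ∀ t, a < t → t < c → r (f t) < max (r (f a)) (r (f c))

theorem TroughSegment.mono {a c a' c' : ℕ} (h : TroughSegment r f a c) (ha : a ≤ a') (hc : c' ≤ c)
    (hmax : max (r (f a)) (r (f c)) ≤ max (r (f a')) (r (f c'))) : TroughSegment r f a' c' :=
  fun t hat htc => (h t (by omega) (by omega)).trans_le hmax

theorem exists_rank_peak (hinj : Set.InjOn (r ∘ f) (Set.Iic K)) {a b : ℕ} (hab : a ≤ b)
    (hbK : b ≤ K) :
    ∃ j, a ≤ j ∧ j ≤ b ∧ ∀ t, a ≤ t → t ≤ b → t ≠ j → r (f t) < r (f j) := by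
  obtain ⟨j, hj, hmax⟩ := Finset.exists_max_image (Finset.Icc a b) (r ∘ f) ⟨a, by simp [hab]⟩
  rw [Finset.mem_Icc] at hj
  refine ⟨j, hj.1, hj.2, fun t hat htb htj => (hmax t (by simp [hat, htb])).lt_of_ne ?_⟩
  exact fun h => htj (hinj (by simp only [Set.mem_Iic]; omega) (by simp only [Set.mem_Iic]; omega) h)

def CoversTroughSegments (E : V → V → Prop) (r : V → ℕ) (f : ℕ → V) (K n L : ℕ) : Prop :=
  ∀ a c, a < c → c ≤ K → c - a ≤ L → TroughSegment r f a c → HDCov E r n (f a) (f c) (c - a)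

theorem coversTroughSegments_zero_one (hE : ∀ t < K, E (f t) (f (t + 1))) :
    CoversTroughSegments E r f K 0 1 := by
  intro a c hac hcK hlen _
  obtain rfl : c = a + 1 := by omega
  simpa using HDCov.edge (r := r) (hE a (by omega))

namespace CoversTroughSegments

variable {n L a m c : ℕ}

theorem hdcov_of_lt (IH : CoversTroughSegments E r f K n L)
    (hinj : Set.InjOn (r ∘ f) (Set.Iic K)) (ham : a < m) (hmc : m < c) (hcK : c ≤ K)
    (hlen₁ : m - a ≤ L) (hlen₂ : c - m ≤ L) (htr : TroughSegment r f a c)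
    (hlt : r (f a) < r (f c)) : HDCov E r (n + 2) (f a) (f c) (c - a) := by
  have htop : ∀ t, a < t → t < c → r (f t) < r (f c) := fun t h₁ h₂ =>
    max_eq_right hlt.le ▸ htr t h₁ h₂
  obtain ⟨j, haj, hjm, hpeak⟩ := exists_rank_peak hinj ham.le (by omega)
  have hC : HDCov E r n (f m) (f c) (c - m) :=
    IH m c hmc hcK hlen₂ (htr.mono ham.le le_rfl (by simp [hlt.le]))
  have hjc : HDCov E r (n + 1) (f j) (f c) (c - j) := by
    rcases hjm.eq_or_lt with rfl | hjm
    · exact hC.mono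
    · have hB := IH j m hjm (by omega) (by omega) fun t h₁ h₂ =>
        (hpeak t (by omega) h₂.le (by omega)).trans_le (le_max_left _ _)
      exact Nat.sub_add_sub_cancel hmc.le hjm.le ▸
        hB.concat_valley hC (hpeak m (by omega) le_rfl hjm.ne') (htop m ham hmc)
  rcases haj.eq_or_lt with rfl | haj
  · exact hjc.mono
  · have hA := IH a j haj (by omega) (by omega) fun t h₁ h₂ =>
      (hpeak t h₁.le (by omega) h₂.ne).trans_le (le_max_right _ _)
    exact Nat.sub_add_sub_cancel (hjm.trans hmc.le) haj.le ▸
      hA.mono.concat_ascending hjc (hpeak a le_rfl (by omega) haj.ne) (htop j haj (by omega))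

theorem hdcov_of_gt (IH : CoversTroughSegments E r f K n L)
    (hinj : Set.InjOn (r ∘ f) (Set.Iic K)) (ham : a < m) (hmc : m < c) (hcK : c ≤ K)
    (hlen₁ : m - a ≤ L) (hlen₂ : c - m ≤ L) (htr : TroughSegment r f a c)
    (hgt : r (f c) < r (f a)) : HDCov E r (n + 2) (f a) (f c) (c - a) := by
  have htop : ∀ t, a < t → t < c → r (f t) < r (f a) := fun t h₁ h₂ =>
    max_eq_left hgt.le ▸ htr t h₁ h₂
  obtain ⟨j, hmj, hjc, hpeak⟩ := exists_rank_peak hinj hmc.le hcK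
  have hA : HDCov E r n (f a) (f m) (m - a) :=
    IH a m ham (by omega) hlen₁ (htr.mono le_rfl hmc.le (by simp [hgt.le]))
  have haj : HDCov E r (n + 1) (f a) (f j) (j - a) := by
    rcases hmj.eq_or_lt with rfl | hmj
    · exact hA.mono
    · have hB := IH m j hmj (by omega) (by omega) fun t h₁ h₂ =>
        (hpeak t h₁.le (by omega) h₂.ne).trans_le (le_max_right _ _)
      exact Nat.sub_add_sub_cancel hmj.le ham.le ▸
        hA.concat_valley hB (htop m ham hmc) (hpeak m le_rfl (by omega) hmj.ne)
  rcases hjc.eq_or_lt with rfl | hjc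
  · exact haj.mono
  · have hC := IH j c hjc hcK (by omega) fun t h₁ h₂ =>
      (hpeak t (by omega) h₂.le (by omega)).trans_le (le_max_left _ _)
    exact Nat.sub_add_sub_cancel hjc.le (ham.le.trans hmj) ▸
      haj.concat_descending hC.mono (htop j (by omega) hjc) (hpeak c (by omega) le_rfl hjc.ne')

theorem double (IH : CoversTroughSegments E r f K n L) (hinj : Set.InjOn (r ∘ f) (Set.Iic K)) :
    CoversTroughSegments E r f K (n + 2) (2 * L) := by
  intro a c hac hcK hlen htr
  by_cases hshort : c - a ≤ L
  · exact (IH a c hac hcK hshort htr).mono_of_le (by omega)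
  have hsplit : a < c - (c - a) / 2 ∧ c - (c - a) / 2 < c := by omega
  rcases lt_trichotomy (r (f a)) (r (f c)) with hlt | heq | hgt
  · exact IH.hdcov_of_lt hinj hsplit.1 hsplit.2 hcK (by omega) (by omega) htr hlt
  · exact absurd (hinj (by simp only [Set.mem_Iic]; omega) (by simpa using hcK) heq) hac.ne
  · exact IH.hdcov_of_gt hinj hsplit.1 hsplit.2 hcK (by omega) (by omega) htr hgt

end CoversTroughSegments

theorem coversTroughSegments_two_pow (hE : ∀ t < K, E (f t) (f (t + 1)))
    (hinj : Set.InjOn (r ∘ f) (Set.Iic K)) (i : ℕ) :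
    CoversTroughSegments E r f K (2 * i) (2 ^ i) := by
  induction i with
  | zero => exact coversTroughSegments_zero_one hE
  | succ i ih =>
    rw [Nat.mul_succ, pow_succ, mul_comm _ 2]
    exact ih.double hinj

end SimplePath

section ListPath

variable {p : List V} {u v : V}

theorem IsPath.shortcut (hp : IsPath E p u v) {i j : ℕ} (hij : i < j) (hj : j < p.length)
    (heq : p[i] = p[j]) : IsPath E (p.take (i + 1) ++ p.drop (j + 1)) u v := by
  obtain ⟨hc, hu, hv⟩ := hp
  refine ⟨(hc.take _).append (hc.drop _) ?_, ?_, ?_⟩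
  · intro x hx y hy
    simp only [List.getLast?_take, List.head?_drop] at hx hy
    obtain ⟨hj₁, rfl⟩ := List.getElem?_eq_some_iff.mp hy
    simp only [Nat.add_eq_zero_iff, one_ne_zero, and_false, ↓reduceIte, add_tsub_cancel_right,
      List.getElem?_eq_getElem (hij.trans hj), Option.some_or, Option.mem_def,
      Option.some.injEq] at hx
    exact hx ▸ heq ▸ List.isChain_iff_getElem.mp hc j hj₁
  · simp [List.head?_append, List.head?_take, hu]
  · by_cases hjl : j + 1 < p.length
    · simp [List.getLast?_append, List.getLast?_drop, hjl, hv]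
    · rw [List.getLast?_eq_getElem?] at hv
      obtain rfl : j = p.length - 1 := by omega
      simp [List.getLast?_append, List.getLast?_drop, List.getLast?_take,
        List.getElem?_eq_getElem (hij.trans hj), heq, ← hv,
        show p.length ≤ p.length - 1 + 1 by omega]

theorem IsShortestPath.nodup_s3 (hp : IsShortestPath E p u v) : p.Nodup := by
  rw [List.nodup_iff_injective_getElem]
  intro i j heq
  by_contra hne
  wlog hij : i < j generalizing i j
  · exact this heq.symm (Ne.symm hne) (by omega)
  have := hp.2 _ (hp.1.shortcut hij j.2 heq)
  simp only [List.length_append, List.length_take, List.length_drop] at this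
  omega

theorem IsPath.length_pos (hp : IsPath E p u v) : 0 < p.length :=
  List.length_pos_iff.mpr fun h => by simp [h, IsPath] at hp

theorem IsPath.getD_zero (hp : IsPath E p u v) : p.getD 0 u = u := by
  have hu := hp.2.1
  rw [List.head?_eq_getElem?, List.getElem?_eq_getElem hp.length_pos] at hu
  rw [List.getD_eq_getElem _ _ hp.length_pos, Option.some_injective _ hu]

theorem IsPath.getD_length_sub_one (hp : IsPath E p u v) : p.getD (p.length - 1) u = v := by
  have hv := hp.2.2
  rw [List.getLast?_eq_getElem?, List.getElem?_eq_getElem (by have := hp.length_pos; omega)] at hv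
  rw [List.getD_eq_getElem _ _ (by have := hp.length_pos; omega), Option.some_injective _ hv]

theorem IsPath.rel_getD (hp : IsPath E p u v) :
    ∀ t < p.length - 1, E (p.getD t u) (p.getD (t + 1) u) := by
  intro t ht
  rw [List.getD_eq_getElem _ _ (by omega), List.getD_eq_getElem _ _ (by omega)]
  exact List.isChain_iff_getElem.mp hp.1 t (by omega)

theorem IsShortestPath.injOn_getD (hp : IsShortestPath E p u v) :
    Set.InjOn (fun t => p.getD t u) (Set.Iic (p.length - 1)) := by
  have hpos := hp.1.length_pos
  intro s hs t ht hst
  simp only [Set.mem_Iic] at hs ht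
  dsimp only at hst
  rw [List.getD_eq_getElem _ _ (by omega), List.getD_eq_getElem _ _ (by omega)] at hst
  exact hp.nodup_s3.getElem_inj_iff.mp hst

theorem Trough.troughSegment_getD (htr : Trough r p u v) (hp : IsPath E p u v) :
    TroughSegment r (fun t => p.getD t u) 0 (p.length - 1) := by
  intro t ht₀ ht
  simp only [hp.getD_zero, hp.getD_length_sub_one]
  rw [List.getD_eq_getElem _ _ (by omega)]
  apply htr
  rw [List.mem_iff_getElem]
  refine ⟨t - 1, by simp only [List.length_dropLast, List.length_drop]; omega, ?_⟩
  rw [List.getElem_dropLast, List.getElem_drop]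
  congr 1
  omega

end ListPath

end

/-- After the 2i-th iteration of hop-doubling, every trough shortest path of hop length
`k ≤ 2^i` is covered by a generated label entry. -/
theorem stmt3 {V : Type*} (E : V → V → Prop) (r : V → ℕ) (hr : Function.Injective r) :
    ∀ i k : ℕ, 0 < k → k ≤ 2 ^ i →
      ∀ (u v : V) (p : List V), IsShortestPath E p u v → Trough r p u v →
        p.length - 1 = k → r u < r v → HDCov E r (2 * i) u v k := by
  rintro i k hk hki u v p hp htr rfl -
  have hcov := coversTroughSegments_two_pow hp.1.rel_getD (hr.comp_injOn hp.injOn_getD) i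
    0 (p.length - 1) hk le_rfl (by simpa using hki) (htr.troughSegment_getD hp.1)
  simp only [hp.1.getD_zero, hp.1.getD_length_sub_one, Nat.sub_zero] at hcov
  exact hcov
end

section
/- Let G=(V,E) be a directed unweighted graph with total ranking r. For any s,t ∈ V with dist_G(s,t) finite, let v_m be a vertex of maximum rank among all vertices lying on some shortest path from s to t (v_m may be s or t). Then there is no vertex w with r(w) > r(v_m) and dist_G(s,w) + dist_G(w,v_m) = dist_G(s,v_m); consequently the entry (s→v_m, dist_G(s,v_m)) cannot be pruned by the rule that removes (u→v,d) when some w with r(w)>max(r(u),r(v)) satisfies dist_G(u,w)+dist_G(w,v) ≤ d. -/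
theorem List.length_append_tail_sub_one {α : Type*} {p : List α} (q : List α) (hp : p ≠ []) :
    (p ++ q.tail).length - 1 = (p.length - 1) + (q.length - 1) := by
  have := List.length_pos_of_ne_nil hp
  simp only [List.length_append, List.length_tail]
  omega

namespace IsPath

variable {V : Type*} {E : V → V → Prop} {p q : List V} {u v w : V}

theorem ne_nil (hp : IsPath E p u v) : p ≠ [] := by
  rintro rfl
  simp [IsPath] at hp

theorem append_tail (hp : IsPath E p u v) (hq : IsPath E q v w) : IsPath E (p ++ q.tail) u w := by
  obtain ⟨hpc, hph, hpl⟩ := hp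
  obtain ⟨hqc, hqh, hql⟩ := hq
  obtain ⟨q, rfl⟩ := List.head?_eq_some_iff.mp hqh
  refine ⟨hpc.append hqc.tail ?_, by simp [List.head?_append, hph], ?_⟩
  · intro x hx y hy
    rw [hpl, Option.mem_some_iff] at hx
    subst hx
    exact hqc.rel_head? hy
  · cases q with
    | nil => simpa [show v = w by simpa using hql] using hpl
    | cons y q => simpa [List.getLast?_append] using hql

end IsPath

section GDist

variable {V : Type*} (E : V → V → Prop)

theorem gDist_le_of_isPath {p : List V} {u v : V} (hp : IsPath E p u v) :
    GDist E u v ≤ ((p.length - 1 : ℕ) : ℕ∞) :=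
  sInf_le ⟨p, hp, rfl⟩

theorem exists_isPath_gDist_eq {u v : V} (h : GDist E u v ≠ ⊤) :
    ∃ p : List V, IsPath E p u v ∧ GDist E u v = ((p.length - 1 : ℕ) : ℕ∞) := by
  unfold GDist at h ⊢
  set lengths := {n : ℕ∞ | ∃ p : List V, IsPath E p u v ∧ n = ((p.length - 1 : ℕ) : ℕ∞)}
  have hne : lengths.Nonempty :=
    Set.nonempty_iff_ne_empty.mpr fun hempty => h (by rw [hempty, sInf_empty])
  exact csInf_mem hne

theorem gDist_triangle (u v w : V) : GDist E u w ≤ GDist E u v + GDist E v w := by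
  by_cases huv : GDist E u v = ⊤
  · simp [huv]
  by_cases hvw : GDist E v w = ⊤
  · simp [hvw]
  obtain ⟨p, hp, hp_len⟩ := exists_isPath_gDist_eq E huv
  obtain ⟨q, hq, hq_len⟩ := exists_isPath_gDist_eq E hvw
  calc GDist E u w ≤ (((p ++ q.tail).length - 1 : ℕ) : ℕ∞) :=
        gDist_le_of_isPath E (hp.append_tail hq)
    _ = GDist E u v + GDist E v w := by
      rw [List.length_append_tail_sub_one q hp.ne_nil, hp_len, hq_len, Nat.cast_add]

/-- In `ℕ∞` this also holds when `GDist E s t = ⊤` and one of the two summands is `⊤`. -/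
def OnShortestPath (s t x : V) : Prop :=
  GDist E s x + GDist E x t = GDist E s t

variable {E}

theorem OnShortestPath.trans {s t v w : V} (hw : OnShortestPath E s v w)
    (hv : OnShortestPath E s t v) : OnShortestPath E s t w := by
  refine le_antisymm ?_ (gDist_triangle E s w t)
  calc GDist E s w + GDist E w t ≤ GDist E s w + (GDist E w v + GDist E v t) := by
        gcongr; exact gDist_triangle E w v t
    _ = GDist E s t := by rw [← add_assoc, hw, hv]

end GDist

theorem stmt5_general {V : Type*} (E : V → V → Prop) (r : V → ℕ)
    (s t vm : V)
    (hon : GDist E s vm + GDist E vm t = GDist E s t)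
    (hmax : ∀ w : V, GDist E s w + GDist E w t = GDist E s t → r w ≤ r vm) :
    ¬ ∃ w : V, r vm < r w ∧ GDist E s w + GDist E w vm = GDist E s vm := by
  rintro ⟨w, hrw, hw⟩
  have hw_on : OnShortestPath E s t w := OnShortestPath.trans hw hon
  exact (hmax w hw_on).not_gt hrw

theorem stmt5 {V : Type*} (E : V → V → Prop) (r : V → ℕ) (hr : Function.Injective r)
    (s t vm : V)
    (hst : GDist E s t ≠ ⊤)
    (hon : GDist E s vm + GDist E vm t = GDist E s t)
    (hmax : ∀ w : V, GDist E s w + GDist E w t = GDist E s t → r w ≤ r vm) :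
    ¬ ∃ w : V, r vm < r w ∧ GDist E s w + GDist E w vm = GDist E s vm :=
  stmt5_general E r s t vm hon hmax
end

section
/- Let G=(V,E) be a directed unweighted graph with hop diameter D_H (the maximum number of edges over all pairwise shortest paths between connected pairs). In the hop-doubling labeling algorithm with exhaustive pruning, no new label entries are generated after iteration 2⌈log₂ D_H⌉; i.e., the number of iterations is at most 2⌈log₂ D_H⌉. -/
/-!
Take an entry `(u, v, d)` produced at iteration `k + 1 > 2⌈log₂ D_H⌉`. By the invariant, the pruned
labels of iteration `k` already cover `u ⇝ v` through its hub `w`, the top-ranked vertex on a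
shortest path; since `u` and `v` lie on every such path, `w` outranks both. If it strictly outranks
them, the entry is pruned. Otherwise `w` is an endpoint, so the invariant supplies an older entry
`(u, v, d')` with `d' ≤ d`, and the new one would have been discarded as a duplicate.
-/

theorem GDist_self {V : Type*} (E : V → V → Prop) (u : V) : GDist E u u = 0 :=
  nonpos_iff_eq_zero.mp <| sInf_le ⟨[u], ⟨List.isChain_singleton u, rfl, rfl⟩, rfl⟩

theorem eq_or_eq_or_max_lt_of_le_of_le {α β : Type*} [LinearOrder β] {r : α → β}
    (hr : Function.Injective r) {u v w : α} (hu : r u ≤ r w) (hv : r v ≤ r w) :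
    w = u ∨ w = v ∨ max (r u) (r v) < r w := by
  rcases hu.eq_or_lt with h | hu'
  · exact Or.inl (hr h.symm)
  rcases hv.eq_or_lt with h | hv'
  · exact Or.inr (Or.inl (hr h.symm))
  exact Or.inr (Or.inr (max_lt hu' hv'))

/-- `L k` is the set of label entries (u, v, d) surviving at the end of iteration `k`. -/
theorem stmt6_general {V : Type*} (E : V → V → Prop) (r : V → ℕ) (hr : Function.Injective r)
    (L : ℕ → Set (V × V × ℕ)) (DH : ℕ)
    (hsound : ∀ (k : ℕ) (u v : V) (d : ℕ), (u, v, d) ∈ L k → GDist E u v ≤ (d : ℕ∞))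
    (hdedup : ∀ (k : ℕ) (u v : V) (d : ℕ), (u, v, d) ∈ L (k + 1) →
      (u, v, d) ∈ L k ∨ ∀ d' : ℕ, (u, v, d') ∈ L k → ¬ d' ≤ d)
    (hprune : ∀ (k : ℕ) (u v : V) (d : ℕ), (u, v, d) ∈ L (k + 1) →
      ¬ ∃ (w : V) (d1 d2 : ℕ), max (r u) (r v) < r w ∧
        (u, w, d1) ∈ L k ∧ (w, v, d2) ∈ L k ∧ d1 + d2 ≤ d)
    (hinv : ∀ k : ℕ, 2 * Nat.clog 2 DH ≤ k → ∀ u v : V, GDist E u v ≠ ⊤ →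
      ∃ (vm : V) (d1 d2 : ℕ), (u, vm, d1) ∈ L k ∧ (vm, v, d2) ∈ L k ∧
        (d1 : ℕ∞) + (d2 : ℕ∞) = GDist E u v ∧
        (d1 : ℕ∞) = GDist E u vm ∧ (d2 : ℕ∞) = GDist E vm v ∧
        ∀ w : V, GDist E u w + GDist E w v = GDist E u v → r w ≤ r vm) :
    ∀ k : ℕ, 2 * Nat.clog 2 DH ≤ k → L (k + 1) ⊆ L k := by
  rintro k hk ⟨u, v, d⟩ hx
  have hle := hsound (k + 1) u v d hx
  obtain ⟨w, d1, d2, huw, hwv, hsum, hd1, hd2, hmax⟩ :=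
    hinv k hk u v (ne_top_of_le_ne_top (ENat.natCast_ne_top d) hle)
  have hd : d1 + d2 ≤ d := by exact_mod_cast hsum.trans_le hle
  have of_le : ∀ d', (u, v, d') ∈ L k → d' ≤ d → (u, v, d) ∈ L k := fun d' hd' hle' =>
    (hdedup k u v d hx).resolve_right fun hnew => hnew d' hd' hle'
  have hu : r u ≤ r w := hmax u (by simp [GDist_self])
  have hv : r v ≤ r w := hmax v (by simp [GDist_self])
  rcases eq_or_eq_or_max_lt_of_le_of_le hr hu hv with rfl | rfl | hlt
  · have : d1 = 0 := by exact_mod_cast hd1.trans (GDist_self E w)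
    exact of_le d2 hwv (by omega)
  · have : d2 = 0 := by exact_mod_cast hd2.trans (GDist_self E w)
    exact of_le d1 huw (by omega)
  · exact absurd ⟨w, d1, d2, hlt, huw, hwv, hd⟩ (hprune k u v d hx)

/-- No new label entries after iteration `2⌈log₂ D_H⌉` in hop-doubling with pruning.
`L k` is the set of label entries (u, v, d) surviving at the end of iteration `k`. -/
theorem stmt6 {V : Type*} (E : V → V → Prop) (r : V → ℕ) (hr : Function.Injective r)
    (L : ℕ → Set (V × V × ℕ)) (DH : ℕ)
    (hDH : ∀ u v : V, GDist E u v ≠ ⊤ → GDist E u v ≤ (DH : ℕ∞))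
    (hsound : ∀ (k : ℕ) (u v : V) (d : ℕ), (u, v, d) ∈ L k → GDist E u v ≤ (d : ℕ∞))
    (hdedup : ∀ (k : ℕ) (u v : V) (d : ℕ), (u, v, d) ∈ L (k + 1) →
      (u, v, d) ∈ L k ∨ ∀ d' : ℕ, (u, v, d') ∈ L k → ¬ d' ≤ d)
    (hprune : ∀ (k : ℕ) (u v : V) (d : ℕ), (u, v, d) ∈ L (k + 1) →
      ¬ ∃ (w : V) (d1 d2 : ℕ), max (r u) (r v) < r w ∧
        (u, w, d1) ∈ L k ∧ (w, v, d2) ∈ L k ∧ d1 + d2 ≤ d)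
    (hinv : ∀ k : ℕ, 2 * Nat.clog 2 DH ≤ k → ∀ u v : V, GDist E u v ≠ ⊤ →
      ∃ (vm : V) (d1 d2 : ℕ), (u, vm, d1) ∈ L k ∧ (vm, v, d2) ∈ L k ∧
        (d1 : ℕ∞) + (d2 : ℕ∞) = GDist E u v ∧
        (d1 : ℕ∞) = GDist E u vm ∧ (d2 : ℕ∞) = GDist E vm v ∧
        ∀ w : V, GDist E u w + GDist E w v = GDist E u v → r w ≤ r vm) :
    ∀ k : ℕ, 2 * Nat.clog 2 DH ≤ k → L (k + 1) ⊆ L k :=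
  stmt6_general E r hr L DH hsound hdedup hprune hinv
end

section
/- Let G=(V,E) be a directed unweighted graph with total ranking r. In the hop-stepping labeling algorithm—initialized with label entries for all edges, and where iteration i+1 concatenates an entry covering an i-hop trough path with an entry covering a single edge—for every 1 ≤ i ≤ D_H, after the i-th iteration the label entries covering all trough shortest paths of hop length exactly i have been generated. -/
/-- A list of vertices is a trough path: every internal vertex is ranked strictly
below the maximum rank of the two endpoints. -/
def TroughL {V : Type*} (r : V → ℕ) (p : List V) : Prop :=
  ∀ u v : V, p.head? = some u → p.getLast? = some v →
    ∀ x ∈ (p.drop 1).dropLast, r x < max (r u) (r v)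

/-- `HSCov E r i p` : at iteration `i` of hop-stepping, a label entry covering the
path `p` has been generated. Iteration 1 covers the edges; iteration `i+1` extends an
`i`-hop covered path by a single edge at either end, provided the result is a trough path. -/
inductive HSCov {V : Type*} (E : V → V → Prop) (r : V → ℕ) : ℕ → List V → Prop
  | base {u v : V} : E u v → HSCov E r 1 [u, v]
  | prepend {i : ℕ} {u w : V} {p : List V} : HSCov E r i (w :: p) → E u w →
      TroughL r (u :: w :: p) → HSCov E r (i + 1) (u :: w :: p)
  | append {i : ℕ} {p : List V} {v w : V} : HSCov E r i p → p.getLast? = some v →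
      E v w → TroughL r (p ++ [w]) → HSCov E r (i + 1) (p ++ [w])

section HopStepping

variable {V : Type*} {E : V → V → Prop} {r : V → ℕ}

theorem List.internal_tail_subset {α : Type*} (p : List α) :
    (p.tail.drop 1).dropLast ⊆ (p.drop 1).dropLast := by
  rw [List.drop_one, List.drop_one, ← List.tail_dropLast]
  exact List.tail_subset _

theorem List.internal_dropLast_subset {α : Type*} (p : List α) :
    (p.dropLast.drop 1).dropLast ⊆ (p.drop 1).dropLast := by
  rw [← List.dropLast_drop_eq_drop_dropLast]
  exact List.dropLast_subset _

theorem Trough.tail {p : List V} {u v : V} (h : Trough r p u v) (huv : r u ≤ r v) (w : V) :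
    Trough r p.tail w v := fun x hx => by
  have hx := h x (List.internal_tail_subset p hx)
  rw [max_eq_right huv] at hx
  exact lt_max_of_lt_right hx

theorem Trough.dropLast {p : List V} {u v : V} (h : Trough r p u v) (hvu : r v ≤ r u) (w : V) :
    Trough r p.dropLast u w := fun x hx => by
  have hx := h x (List.internal_dropLast_subset p hx)
  rw [max_eq_left hvu] at hx
  exact lt_max_of_lt_left hx

theorem Trough.troughL {p : List V} {u v : V} (hp : IsPath E p u v) (h : Trough r p u v) :
    TroughL r p := by
  intro u' v' hu' hv'
  obtain rfl : u = u' := Option.some.inj (hp.2.1.symm.trans hu')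
  obtain rfl : v = v' := Option.some.inj (hp.2.2.symm.trans hv')
  exact h

theorem IsPath.of_cons_cons {u w v : V} {t : List V} (h : IsPath E (u :: w :: t) u v) :
    E u w ∧ IsPath E (w :: t) w v := by
  obtain ⟨hchain, -, hlast⟩ := h
  obtain ⟨hE, hchain⟩ := List.isChain_cons_cons.mp hchain
  exact ⟨hE, hchain, rfl, by rwa [List.getLast?_cons_cons] at hlast⟩

theorem IsPath.of_append_singleton {q : List V} {u v w : V} (h : IsPath E (q ++ [v]) u v)
    (hq : q.getLast? = some w) : E w v ∧ IsPath E q u w := by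
  obtain ⟨hchain, hhead, -⟩ := h
  have hne : q ≠ [] := by rintro rfl; simp at hq
  replace hchain := List.isChain_append.mp hchain
  refine ⟨hchain.2.2 w hq v rfl, hchain.1, ?_, hq⟩
  rwa [List.head?_append_of_ne_nil _ hne] at hhead

theorem hsCov_of_isPath_of_trough (k : ℕ) :
    ∀ (p : List V) (u v : V), IsPath E p u v → Trough r p u v → p.length = k + 2 →
      HSCov E r (k + 1) p := by
  induction k with
  | zero =>
    rintro (_ | ⟨a, _ | ⟨b, _ | _⟩⟩) - - ⟨hchain, -, -⟩ - hlen <;> simp at hlen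
    exact HSCov.base (List.isChain_pair.mp hchain)
  | succ k ih =>
    intro p u v hp ht hlen
    have hTL := ht.troughL hp
    rcases le_total (r u) (r v) with huv | hvu
    · obtain ⟨_ | ⟨w, t⟩, rfl⟩ := List.head?_eq_some_iff.mp hp.2.1
      · simp at hlen
      obtain ⟨hE, hpath⟩ := hp.of_cons_cons
      have hcov := ih (w :: t) w v hpath (ht.tail huv w) (by simpa using hlen)
      exact HSCov.prepend hcov hE hTL
    · obtain ⟨q, rfl⟩ := List.getLast?_eq_some_iff.mp hp.2.2
      have hne : q ≠ [] := by rintro rfl; simp at hlen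
      obtain ⟨w, hw⟩ := Option.isSome_iff_exists.mp (List.getLast?_isSome.mpr hne)
      obtain ⟨hE, hpath⟩ := hp.of_append_singleton hw
      have hcov := ih q u w hpath (by simpa using ht.dropLast hvu w) (by simpa using hlen)
      exact HSCov.append hcov hw hE hTL

end HopStepping

theorem stmt7_general {V : Type*} (E : V → V → Prop) (r : V → ℕ) :
    ∀ i : ℕ, 1 ≤ i → ∀ (p : List V) (u v : V),
      IsShortestPath E p u v → Trough r p u v → p.length - 1 = i →
      HSCov E r i p := by
  intro i hi p u v hsp ht hlen
  obtain ⟨k, rfl⟩ : ∃ k, i = k + 1 := ⟨i - 1, by omega⟩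
  exact hsCov_of_isPath_of_trough k p u v hsp.1 ht (by omega)

/-- Completeness of hop-stepping: after the i-th iteration, the label entries covering
all trough shortest paths of hop length exactly i have been generated. -/
theorem stmt7 {V : Type*} (E : V → V → Prop) (r : V → ℕ) (hr : Function.Injective r) :
    ∀ i : ℕ, 1 ≤ i → ∀ (p : List V) (u v : V),
      IsShortestPath E p u v → Trough r p u v → p.length - 1 = i →
      HSCov E r i p :=
  stmt7_general E r
end
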